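/- arXiv:1001.1196 — 2 statements merged into one kernel-verified Lean document; each statement's English description precedes it below -/
import Mathlib

section
/- Let Ξ be an x-tower site in F^2 with parameters m_0 > m_1 > ... > m_ν ≥ 0. Then the set of monomials not in the initial ideal of I(Ξ) with respect to tdlex (the Gröbner éscalier) is exactly {x^i y^j : 0 ≤ j ≤ ν, 0 ≤ i ≤ m_j} = {x^i y^j : (i,j) ∈ S_x(Ξ)}. -/
open MvPolynomial

noncomputable def vanishingIdeal {F : Type*} [Field F] (Ξ : Set (F × F)) :
    Ideal (MvPolynomial (Fin 2) F) :=
  ⨅ ξ ∈ Ξ, RingHom.ker (eval (fun i : Fin 2 => if i = 0 then ξ.1 else ξ.2) :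
    MvPolynomial (Fin 2) F →+* F)

/-- The exponent vector of the monomial `x^a y^b`. -/
noncomputable def deg2 (a b : ℕ) : Fin 2 →₀ ℕ := Finsupp.single 0 a + Finsupp.single 1 b

/-- The tdlex order (total degree first, then lexicographically with `x ≻ y`)
on exponent pairs. -/
def tdlexLE (a b : ℕ × ℕ) : Prop :=
  a.1 + a.2 < b.1 + b.2 ∨ (a.1 + a.2 = b.1 + b.2 ∧ a.1 ≤ b.1)

/-- `x^{d.1} y^{d.2}` is the tdlex-leading monomial of `p`. -/
def IsTdlexLM {F : Type*} [Field F] (p : MvPolynomial (Fin 2) F) (d : ℕ × ℕ) : Prop :=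
  coeff (deg2 d.1 d.2) p ≠ 0 ∧
    ∀ e : Fin 2 →₀ ℕ, coeff e p ≠ 0 → tdlexLE (e 0, e 1) d

/-- The initial (leading term) ideal of `I` w.r.t. tdlex. -/
noncomputable def ltIdeal {F : Type*} [Field F] (I : Ideal (MvPolynomial (Fin 2) F)) :
    Ideal (MvPolynomial (Fin 2) F) :=
  Ideal.span {q | ∃ p ∈ I, ∃ d : ℕ × ℕ, IsTdlexLM p d ∧ q = X 0 ^ d.1 * X 1 ^ d.2}

section Aux
variable {F : Type*} [Field F]

lemma deg2_apply_zero (a b : ℕ) : deg2 a b 0 = a := by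
  simp [deg2, Finsupp.single_apply]

lemma deg2_apply_one (a b : ℕ) : deg2 a b 1 = b := by
  simp [deg2, Finsupp.single_apply]

lemma deg2_eta (e : Fin 2 →₀ ℕ) : deg2 (e 0) (e 1) = e := by
  ext i
  fin_cases i
  · exact deg2_apply_zero _ _
  · exact deg2_apply_one _ _

lemma deg2_inj {a b a' b' : ℕ} (h : deg2 a b = deg2 a' b') : a = a' ∧ b = b' := by
  constructor
  · have := congrArg (fun f : Fin 2 →₀ ℕ => f 0) h
    simpa [deg2_apply_zero] using this
  · have := congrArg (fun f : Fin 2 →₀ ℕ => f 1) h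
    simpa [deg2_apply_one] using this

lemma X_pow_mul_eq (a b : ℕ) :
    (X 0 ^ a * X 1 ^ b : MvPolynomial (Fin 2) F) = monomial (deg2 a b) 1 := by
  rw [X_pow_eq_monomial, X_pow_eq_monomial, monomial_mul, deg2, one_mul]

lemma exists_isTdlexLM {p : MvPolynomial (Fin 2) F} (hp : p ≠ 0) :
    ∃ c d : ℕ, IsTdlexLM p (c, d) := by
  obtain ⟨e, he, hmax⟩ := p.support.exists_max_image
      (fun e => toLex (e 0 + e 1, e 0)) (support_nonempty.2 hp)
  refine ⟨e 0, e 1, ?_, ?_⟩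
  · rw [deg2_eta]; exact mem_support_iff.1 he
  · intro e' he'
    have h := hmax e' (mem_support_iff.2 he')
    rw [Prod.Lex.le_iff] at h
    exact h

lemma isTdlexLM_unique {p : MvPolynomial (Fin 2) F} {d d' : ℕ × ℕ}
    (h : IsTdlexLM p d) (h' : IsTdlexLM p d') : d = d' := by
  have h1 := h'.2 _ h.1
  have h2 := h.2 _ h'.1
  rw [deg2_apply_zero, deg2_apply_one] at h1 h2
  unfold tdlexLE at h1 h2
  ext
  · omega
  · omega

/-- Multiplying by `(y - a)` shifts the tdlex leading monomial by `y`. -/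
lemma isTdlexLM_linear_mul (aa : F) {q : MvPolynomial (Fin 2) F} {c d : ℕ}
    (hq : IsTdlexLM q (c, d)) : IsTdlexLM ((X 1 - C aa) * q) (c, d + 1) := by
  classical
  have hhigh : coeff (deg2 c (d + 1)) q = 0 := by
    by_contra h
    have := hq.2 _ h
    rw [deg2_apply_zero, deg2_apply_one] at this
    unfold tdlexLE at this
    omega
  constructor
  · rw [sub_mul, coeff_sub, coeff_C_mul]
    have h1 : deg2 c (d + 1) = Finsupp.single 1 1 + deg2 c d := by
      rw [deg2, deg2, Finsupp.single_add]; abel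
    rw [h1, coeff_X_mul]
    have : coeff (Finsupp.single 1 1 + deg2 c d) q = 0 := by rw [← h1]; exact hhigh
    rw [this, mul_zero, sub_zero]
    exact hq.1
  · intro e he
    rw [sub_mul, coeff_sub, coeff_C_mul, coeff_X_mul'] at he
    have hor : ((1 : Fin 2) ∈ e.support ∧ coeff (e - Finsupp.single 1 1) q ≠ 0)
        ∨ coeff e q ≠ 0 := by
      by_contra hc
      push_neg at hc
      rcases hc with ⟨hc1, hc2⟩
      rw [hc2, mul_zero, sub_zero] at he
      by_cases hm : (1 : Fin 2) ∈ e.support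
      · rw [if_pos hm] at he; exact he (hc1 hm)
      · rw [if_neg hm] at he; exact he rfl
    rcases hor with ⟨hm, hco⟩ | hco
    · have := hq.2 _ hco
      have he0 : (e - Finsupp.single 1 1 : Fin 2 →₀ ℕ) 0 = e 0 := by
        rw [Finsupp.tsub_apply]; simp [Finsupp.single_apply]
      have he1 : (e - Finsupp.single 1 1 : Fin 2 →₀ ℕ) 1 = e 1 - 1 := by
        rw [Finsupp.tsub_apply]; simp [Finsupp.single_apply]
      rw [he0, he1] at this
      have hpos : 1 ≤ e 1 := by
        rw [Finsupp.mem_support_iff] at hm; omega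
      unfold tdlexLE at this ⊢
      simp only at this ⊢
      omega
    · have := hq.2 _ hco
      unfold tdlexLE at this ⊢
      simp only at this ⊢
      omega

/-- The univariate specialization `y := a`, landing in `F[x]`. -/
noncomputable def toUni (a : F) : MvPolynomial (Fin 2) F →+* Polynomial F :=
  eval₂Hom Polynomial.C (fun i : Fin 2 => if i = 0 then Polynomial.X else Polynomial.C a)

lemma toUni_coeff (a : F) (p : MvPolynomial (Fin 2) F) (n : ℕ) :
    (toUni a p).coeff n
      = ∑ e ∈ p.support, if e 0 = n then coeff e p * a ^ (e 1) else 0 := by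
  rw [toUni, coe_eval₂Hom, eval₂_eq' _ _ p, Polynomial.finset_sum_coeff]
  refine Finset.sum_congr rfl fun e _ => ?_
  rw [Fin.prod_univ_two]
  have h0 : (if (0:Fin 2) = 0 then Polynomial.X (R := F) else Polynomial.C a) = Polynomial.X :=
    if_pos rfl
  have h1 : (if (1:Fin 2) = 0 then Polynomial.X (R := F) else Polynomial.C a) = Polynomial.C a := by
    norm_num
  rw [h0, h1, ← Polynomial.C_pow, mul_comm (Polynomial.X ^ e 0), ← mul_assoc,
    ← Polynomial.C_mul, Polynomial.coeff_C_mul, Polynomial.coeff_X_pow]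
  by_cases h : e 0 = n
  · subst h; simp
  · simp [h, Ne.symm h]

lemma toUni_eval (a x₀ : F) (p : MvPolynomial (Fin 2) F) :
    (toUni a p).eval x₀ = eval (fun i : Fin 2 => if i = 0 then x₀ else a) p := by
  have h : (Polynomial.evalRingHom x₀).comp (toUni a)
      = (eval (fun i : Fin 2 => if i = 0 then x₀ else a) :
          MvPolynomial (Fin 2) F →+* F) := by
    apply MvPolynomial.ringHom_ext
    · intro r; simp [toUni]
    · intro i
      by_cases hi : i = 0 <;> simp [toUni, hi]
  exact DFunLike.congr_fun h p

lemma toUni_natDegree_le (a : F) (p : MvPolynomial (Fin 2) F) (D : ℕ)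
    (h : ∀ e ∈ p.support, e 0 + e 1 ≤ D) : (toUni a p).natDegree ≤ D := by
  rw [Polynomial.natDegree_le_iff_coeff_eq_zero]
  intro N hN
  rw [toUni_coeff]
  refine Finset.sum_eq_zero fun e he => ?_
  have := h e he
  rw [if_neg (by omega)]

noncomputable def backUni : Polynomial F →+* MvPolynomial (Fin 2) F :=
  Polynomial.eval₂RingHom MvPolynomial.C (X 0)

lemma dvd_sub_backUni (a : F) (p : MvPolynomial (Fin 2) F) :
    (X 1 - C a) ∣ (p - backUni (toUni a p)) := by
  induction p using MvPolynomial.induction_on with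
  | C r => simp [toUni, backUni]
  | add p q hp hq =>
      have h : p + q - backUni (toUni a (p + q))
          = (p - backUni (toUni a p)) + (q - backUni (toUni a q)) := by
        rw [map_add, map_add]; ring
      rw [h]; exact dvd_add hp hq
  | mul_X p i hp =>
      have hX : toUni a (p * X i) = toUni a p * toUni a (X i) := map_mul _ _ _
      by_cases hi : i = 0
      · subst hi
        have h1 : toUni a (X (0 : Fin 2)) = Polynomial.X := by simp [toUni]
        have h2 : backUni (toUni a p * Polynomial.X) = backUni (toUni a p) * X 0 := by
          rw [map_mul]; simp [backUni]
        have h : p * X 0 - backUni (toUni a (p * X 0))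
            = (p - backUni (toUni a p)) * X 0 := by
          rw [hX, h1, h2]; ring
        rw [h]; exact hp.mul_right _
      · have hi1 : i = 1 := by omega
        subst hi1
        have h1 : toUni a (X (1 : Fin 2)) = Polynomial.C a := by simp [toUni]
        have h2 : backUni (toUni a p * Polynomial.C a) = backUni (toUni a p) * C a := by
          rw [map_mul]; simp [backUni]
        have h : p * X 1 - backUni (toUni a (p * X 1))
            = (p - backUni (toUni a p)) * X 1 + backUni (toUni a p) * (X 1 - C a) := by
          rw [hX, h1, h2]; ring
        rw [h]
        exact dvd_add (hp.mul_right _) (dvd_mul_left _ _)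

lemma exists_factor_of_toUni_zero (a : F) (p : MvPolynomial (Fin 2) F)
    (h : toUni a p = 0) : ∃ q, p = (X 1 - C a) * q := by
  have hd := dvd_sub_backUni a p
  rw [h, map_zero, sub_zero] at hd
  exact hd

lemma m_gap (ν : ℕ) (m : ℕ → ℕ) (hm : ∀ j k, j < k → k ≤ ν → m k < m j) :
    ∀ δ k, k + δ ≤ ν → m (k + δ) + δ ≤ m k := by
  intro δ
  induction δ with
  | zero => intro k _; simp
  | succ n ihδ =>
      intro k h
      have h1 : m (k + n + 1) < m (k + n) := hm (k + n) (k + n + 1) (by omega) (by omega)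
      have h2 := ihδ k (by omega)
      have h3 : k + (n + 1) = k + n + 1 := by omega
      rw [h3]; omega

/-- Core lemma: a nonzero polynomial vanishing on rows `k, k+1, …, ν` of the tower
cannot have a tdlex leading monomial `x^c y^dd` with `k + dd ≤ ν` and `c ≤ m (k+dd)`. -/
lemma core_no_small_LM (ν : ℕ) (m : ℕ → ℕ) (y : ℕ → F) (xs : ℕ → ℕ → F)
    (hm : ∀ j k, j < k → k ≤ ν → m k < m j)
    (hy : ∀ j k, j ≤ ν → k ≤ ν → y j = y k → j = k)
    (hx : ∀ j s t, j ≤ ν → s ≤ m j → t ≤ m j → xs s j = xs t j → s = t) :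
    ∀ (dd k c : ℕ) (p : MvPolynomial (Fin 2) F), k + dd ≤ ν → c ≤ m (k + dd) →
      (∀ j, k ≤ j → j ≤ ν → ∀ i, i ≤ m j →
        eval (fun t : Fin 2 => if t = 0 then xs i j else y j) p = 0) →
      IsTdlexLM p (c, dd) → False := by
  intro dd
  induction dd with
  | zero =>
      intro k c p hkν hc hvan hLM
      simp only [Nat.add_zero] at hc
      have hq0 : toUni (y k) p = 0 := by
        apply Polynomial.eq_zero_of_natDegree_lt_card_of_eval_eq_zero (toUni (y k) p)
          (f := fun i : Fin (m k + 1) => xs i k)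
        · intro i i' hii
          exact Fin.val_injective (hx k i i' (by omega)
            (by have := i.isLt; omega) (by have := i'.isLt; omega) hii)
        · intro i
          rw [toUni_eval]
          exact hvan k le_rfl (by omega) i (by have := i.isLt; omega)
        · rw [Fintype.card_fin]
          have hdeg : (toUni (y k) p).natDegree ≤ c := by
            apply toUni_natDegree_le
            intro e he
            have := hLM.2 e (mem_support_iff.1 he)
            unfold tdlexLE at this; simp only at this; omega
          omega
      have hco : (toUni (y k) p).coeff c = coeff (deg2 c 0) p := by
        rw [toUni_coeff]
        rw [Finset.sum_eq_single_of_mem (deg2 c 0) (mem_support_iff.2 hLM.1)]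
        · rw [if_pos (deg2_apply_zero c 0), deg2_apply_one, pow_zero, mul_one]
        · intro e he hne
          by_cases h0 : e 0 = c
          · exfalso
            have h2 := hLM.2 e (mem_support_iff.1 he)
            unfold tdlexLE at h2; simp only at h2
            have h1 : e 1 = 0 := by omega
            exact hne (by rw [← deg2_eta e, h0, h1])
          · rw [if_neg h0]
      rw [hq0] at hco
      simp only [Polynomial.coeff_zero] at hco
      exact hLM.1 hco.symm
  | succ n ih =>
      intro k c p hkν hc hvan hLM
      have hgap : m (k + (n + 1)) + (n + 1) ≤ m k := m_gap ν m hm (n + 1) k hkν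
      have hq0 : toUni (y k) p = 0 := by
        apply Polynomial.eq_zero_of_natDegree_lt_card_of_eval_eq_zero (toUni (y k) p)
          (f := fun i : Fin (m k + 1) => xs i k)
        · intro i i' hii
          exact Fin.val_injective (hx k i i' (by omega)
            (by have := i.isLt; omega) (by have := i'.isLt; omega) hii)
        · intro i
          rw [toUni_eval]
          exact hvan k le_rfl (by omega) i (by have := i.isLt; omega)
        · rw [Fintype.card_fin]
          have hdeg : (toUni (y k) p).natDegree ≤ c + (n + 1) := by
            apply toUni_natDegree_le
            intro e he
            have := hLM.2 e (mem_support_iff.1 he)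
            unfold tdlexLE at this; simp only at this; omega
          omega
      obtain ⟨p₁, hp₁⟩ := exists_factor_of_toUni_zero _ _ hq0
      have hp₁ne : p₁ ≠ 0 := by
        rintro rfl
        rw [mul_zero] at hp₁
        exact hLM.1 (by rw [hp₁, coeff_zero])
      obtain ⟨c', d', hLM'⟩ := exists_isTdlexLM hp₁ne
      have hLMp : IsTdlexLM p (c', d' + 1) := by
        rw [hp₁]; exact isTdlexLM_linear_mul (y k) hLM'
      have heq : ((c, n + 1) : ℕ × ℕ) = (c', d' + 1) := isTdlexLM_unique hLM hLMp
      have hc1 : c = c' := congrArg Prod.fst heq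
      have hd1 : n + 1 = d' + 1 := congrArg Prod.snd heq
      have hd2 : d' = n := by omega
      have hpair : (c', d') = (c, n) := by rw [hc1, hd2]
      rw [hpair] at hLM'
      have hvan₁ : ∀ j, k + 1 ≤ j → j ≤ ν → ∀ i, i ≤ m j →
          eval (fun t : Fin 2 => if t = 0 then xs i j else y j) p₁ = 0 := by
        intro j hj hjν i hi
        have h0 := hvan j (by omega) hjν i hi
        rw [hp₁, map_mul] at h0
        have hX : eval (fun t : Fin 2 => if t = 0 then xs i j else y j) (X 1 - C (y k))
            = y j - y k := by simp
        rw [hX] at h0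
        rcases mul_eq_zero.1 h0 with h | h
        · exfalso
          have hjk : j = k := hy j k hjν (by omega) (by rwa [sub_eq_zero] at h)
          omega
        · exact h
      have hkn : k + 1 + n = k + (n + 1) := by omega
      exact ih (k + 1) c p₁ (by omega) (by rw [hkn]; exact hc) hvan₁ hLM'

lemma mem_vanishing_iff (ν : ℕ) (m : ℕ → ℕ) (y : ℕ → F) (xs : ℕ → ℕ → F)
    (P : MvPolynomial (Fin 2) F) :
    P ∈ vanishingIdeal {p : F × F | ∃ j ≤ ν, ∃ i ≤ m j, p = (xs i j, y j)} ↔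
      ∀ j, j ≤ ν → ∀ i, i ≤ m j →
        eval (fun t : Fin 2 => if t = 0 then xs i j else y j) P = 0 := by
  unfold _root_.vanishingIdeal
  simp only [Ideal.mem_iInf, RingHom.mem_ker]
  constructor
  · intro h j hj i hi
    exact h (xs i j, y j) ⟨j, hj, i, hi, rfl⟩
  · rintro h ξ ⟨j, hj, i, hi, rfl⟩
    exact h j hj i hi

end Aux

/-- Counting argument: a monomial outside the staircase lies in the initial ideal. -/
lemma mem_ltIdeal_of_not_staircase {F : Type*} [Field F] (ν : ℕ) (m : ℕ → ℕ)
    (y : ℕ → F) (xs : ℕ → ℕ → F)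
    (hm : ∀ j k, j < k → k ≤ ν → m k < m j)
    (hy : ∀ j k, j ≤ ν → k ≤ ν → y j = y k → j = k)
    (hx : ∀ j s t, j ≤ ν → s ≤ m j → t ≤ m j → xs s j = xs t j → s = t)
    (a b : ℕ) (hab : ¬(b ≤ ν ∧ a ≤ m b)) :
    (X 0 ^ a * X 1 ^ b : MvPolynomial (Fin 2) F) ∈
      ltIdeal (vanishingIdeal {p : F × F | ∃ j ≤ ν, ∃ i ≤ m j, p = (xs i j, y j)}) := by
  classical
  by_contra hmem
  set s : Finset ((_ : ℕ) × ℕ) :=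
    (Finset.range (ν + 1)).sigma (fun j => Finset.range (m j + 1)) with hs
  have hmems : ∀ z : (_ : ℕ) × ℕ, z ∈ s ↔ z.1 ≤ ν ∧ z.2 ≤ m z.1 := by
    intro z
    rw [hs, Finset.mem_sigma, Finset.mem_range, Finset.mem_range]
    omega
  let E : (↥s ⊕ Unit) → (Fin 2 →₀ ℕ) := fun z =>
    match z with
    | Sum.inl w => deg2 w.1.2 w.1.1
    | Sum.inr _ => deg2 a b
  have hEinj : Function.Injective E := by
    rintro (w | w) (w' | w') h
    · obtain ⟨h1, h2⟩ := deg2_inj h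
      congr 1
      apply Subtype.ext
      obtain ⟨⟨j, i⟩, hw⟩ := w
      obtain ⟨⟨j', i'⟩, hw'⟩ := w'
      simp only at h1 h2
      subst h1; subst h2; rfl
    · exfalso
      obtain ⟨h1, h2⟩ := deg2_inj h
      have hws := (hmems w.1).1 w.2
      exact hab ⟨by omega, by rw [← h1, ← h2]; exact hws.2⟩
    · exfalso
      obtain ⟨h1, h2⟩ := deg2_inj h
      have hws := (hmems w'.1).1 w'.2
      exact hab ⟨by omega, by rw [h1, h2]; exact hws.2⟩
    · rfl
  let pt : ↥s → (Fin 2 → F) := fun w t => if t = 0 then xs w.1.2 w.1.1 else y w.1.1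
  let Φ : MvPolynomial (Fin 2) F →ₗ[F] (↥s → F) :=
    { toFun := fun p w => eval (pt w) p
      map_add' := fun p q => by funext w; simp
      map_smul' := fun cc p => by funext w; simp [smul_eval] }
  let v : (↥s ⊕ Unit) → MvPolynomial (Fin 2) F := fun z => monomial (E z) 1
  have hli : LinearIndependent F (Φ ∘ v) := by
    rw [Fintype.linearIndependent_iff]
    intro g hg
    set P : MvPolynomial (Fin 2) F := ∑ z, g z • v z with hP
    have hcoeff : ∀ e, coeff e P = ∑ z, if E z = e then g z else 0 := by
      intro e
      rw [hP, coeff_sum]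
      refine Finset.sum_congr rfl fun z _ => ?_
      rw [coeff_smul, coeff_monomial]
      split <;> simp
    have hΦP : Φ P = 0 := by
      rw [hP, map_sum, ← hg]
      exact Finset.sum_congr rfl fun z _ => map_smul Φ (g z) (v z)
    have hvanP : ∀ j, j ≤ ν → ∀ i, i ≤ m j →
        eval (fun t : Fin 2 => if t = 0 then xs i j else y j) P = 0 := by
      intro j hj i hi
      have hzmem : (⟨j, i⟩ : (_ : ℕ) × ℕ) ∈ s := (hmems _).2 ⟨hj, hi⟩
      exact congrFun hΦP ⟨⟨j, i⟩, hzmem⟩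
    by_cases hP0 : P = 0
    · intro z
      have h := hcoeff (E z)
      rw [hP0, coeff_zero,
        Finset.sum_eq_single z (fun z' _ hz' => if_neg (fun hE => hz' (hEinj hE)))
          (by simp), if_pos rfl] at h
      exact h.symm
    · exfalso
      obtain ⟨c, d, hLM⟩ := exists_isTdlexLM hP0
      have hne : coeff (deg2 c d) P ≠ 0 := hLM.1
      have hex : ∃ z, E z = deg2 c d := by
        by_contra hno
        push_neg at hno
        rw [hcoeff] at hne
        exact hne (Finset.sum_eq_zero fun z _ => if_neg (hno z))
      obtain ⟨z, hz⟩ := hex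
      cases z with
      | inl w =>
          obtain ⟨hi, hj⟩ := deg2_inj hz
          have hws := (hmems w.1).1 w.2
          refine core_no_small_LM ν m y xs hm hy hx d 0 c P (by omega) ?_
            (fun j _ hjν i hi' => hvanP j hjν i hi') hLM
          rw [Nat.zero_add, ← hj, ← hi]
          exact hws.2
      | inr _ =>
          obtain ⟨ha, hb⟩ := deg2_inj hz
          apply hmem
          apply Ideal.subset_span
          refine ⟨P, (mem_vanishing_iff ν m y xs P).2 hvanP, (a, b), ?_, rfl⟩
          rw [show ((a, b) : ℕ × ℕ) = (c, d) by rw [ha, hb]]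
          exact hLM
  have hcard := hli.fintype_card_le_finrank
  rw [Module.finrank_pi] at hcard
  simp only [Fintype.card_sum, Fintype.card_coe, Fintype.card_unit] at hcard
  omega

/-- for an x-tower site, the Gröbner éscalier (monomials outside the
tdlex initial ideal of `I(Ξ)`) is exactly `{x^i y^j : (i,j) ∈ S_x(Ξ)}`,
i.e. `{x^i y^j : j ≤ ν, i ≤ m j}`. -/
theorem tower_groebner_escalier {F : Type*} [Field F] (ν : ℕ) (m : ℕ → ℕ)
    (y : ℕ → F) (xs : ℕ → ℕ → F)
    (hm : ∀ j k, j < k → k ≤ ν → m k < m j)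
    (hy : ∀ j k, j ≤ ν → k ≤ ν → y j = y k → j = k)
    (hx : ∀ j s t, j ≤ ν → s ≤ m j → t ≤ m j → xs s j = xs t j → s = t)
    (hbottom : ∀ j ≤ ν, ∀ i ≤ m j, ∃ s ≤ m 0, xs i j = xs s 0) :
    ∀ a b : ℕ,
      (X 0 ^ a * X 1 ^ b : MvPolynomial (Fin 2) F) ∉
          ltIdeal (vanishingIdeal {p : F × F | ∃ j ≤ ν, ∃ i ≤ m j, p = (xs i j, y j)}) ↔
        (b ≤ ν ∧ a ≤ m b) := by
  intro a b
  constructor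
  · intro hnot
    by_contra hab
    exact hnot (mem_ltIdeal_of_not_staircase ν m y xs hm hy hx a b hab)
  · rintro ⟨hb, ha⟩ hmem
    classical
    unfold ltIdeal at hmem
    have hset : {q : MvPolynomial (Fin 2) F |
          ∃ p ∈ vanishingIdeal {p : F × F | ∃ j ≤ ν, ∃ i ≤ m j, p = (xs i j, y j)},
            ∃ d : ℕ × ℕ, IsTdlexLM p d ∧ q = X 0 ^ d.1 * X 1 ^ d.2}
        = (fun e => monomial e (1 : F)) ''
          {e | ∃ p ∈ vanishingIdeal {p : F × F | ∃ j ≤ ν, ∃ i ≤ m j, p = (xs i j, y j)},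
            ∃ d : ℕ × ℕ, IsTdlexLM p d ∧ e = deg2 d.1 d.2} := by
      ext q
      constructor
      · rintro ⟨p, hp, d, hLM, rfl⟩
        exact ⟨deg2 d.1 d.2, ⟨p, hp, d, hLM, rfl⟩, (X_pow_mul_eq d.1 d.2).symm⟩
      · rintro ⟨e, ⟨p, hp, d, hLM, rfl⟩, rfl⟩
        exact ⟨p, hp, d, hLM, (X_pow_mul_eq d.1 d.2).symm⟩
    rw [hset, mem_ideal_span_monomial_image, X_pow_mul_eq] at hmem
    have hsup : deg2 a b ∈ (monomial (deg2 a b) (1 : F)).support := by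
      rw [support_monomial, if_neg one_ne_zero]
      exact Finset.mem_singleton_self _
    obtain ⟨e, ⟨p, hpI, dpair, hLM, rfl⟩, hle⟩ := hmem _ hsup
    have h0 : dpair.1 ≤ a := by
      have := Finsupp.le_def.1 hle 0
      rwa [deg2_apply_zero, deg2_apply_zero] at this
    have h1 : dpair.2 ≤ b := by
      have := Finsupp.le_def.1 hle 1
      rwa [deg2_apply_one, deg2_apply_one] at this
    have hmb : m b ≤ m dpair.2 := by
      rcases Nat.lt_or_ge dpair.2 b with h | h
      · exact le_of_lt (hm dpair.2 b h hb)
      · have hbe : dpair.2 = b := le_antisymm h1 h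
        rw [hbe]
    have hvan := (mem_vanishing_iff ν m y xs p).1 hpI
    refine core_no_small_LM ν m y xs hm hy hx dpair.2 0 dpair.1 p (by omega) ?_
      (fun j _ hjν i hi => hvan j hjν i hi) (by rwa [Prod.mk.eta])
    rw [Nat.zero_add]
    omega
end

section
/- Let Ξ be an x-tower site in F^2 with μ points and let S_x(Ξ) be its associated staircase. Then dim_F (F[x,y] / I(Ξ)) = μ = #S_x(Ξ), and the images of the monomials x^i y^j for (i,j) ∈ S_x(Ξ) form an F-vector space basis of F[x,y]/I(Ξ). -/
/-!
Evaluation at the points of `Ξ`, indexed by the staircase `S = S_x(Ξ)`, identifies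
`F[x,y]/I(Ξ)` with a subspace of `F^S`. The staircase monomials evaluate to linearly independent
vectors: if `f = ∑ a_j(x) y^j` with `deg a_j ≤ m_j` vanishes on `Ξ`, then `f(x, y_0)` has degree
`≤ m_0` and `m_0 + 1` roots, so `y - y_0` divides `f`; the quotient is supported on the staircase
of the shorter tower `(m_1, …, m_ν)` and vanishes on its rows, and induction on `ν` gives `f = 0`.
These are `#S` independent vectors in `F^S`, so evaluation is onto `F^S` and the staircase
monomials form a basis of the quotient.
-/

open MvPolynomial

def towerIndex (ν : ℕ) (m : ℕ → ℕ) : Finset (ℕ × ℕ) :=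
  ((Finset.range (m 0 + 1)) ×ˢ Finset.range (ν + 1)).filter (fun p => p.1 ≤ m p.2)

section towerIndex

variable {ν : ℕ} {m : ℕ → ℕ}

theorem mem_towerIndex (hm : AntitoneOn m (Set.Iic ν)) {p : ℕ × ℕ} :
    p ∈ towerIndex ν m ↔ p.2 ≤ ν ∧ p.1 ≤ m p.2 := by
  simp only [towerIndex, Finset.mem_filter, Finset.mem_product, Finset.mem_range]
  constructor
  · rintro ⟨⟨-, h⟩, hp⟩
    exact ⟨Nat.lt_succ_iff.mp h, hp⟩
  · rintro ⟨h, hp⟩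
    exact ⟨⟨Nat.lt_succ_of_le (hp.trans (hm ν.zero_le h p.2.zero_le)), Nat.lt_succ_of_le h⟩, hp⟩

theorem card_towerIndex (hm : AntitoneOn m (Set.Iic ν)) :
    (towerIndex ν m).card = ∑ j ∈ Finset.range (ν + 1), (m j + 1) := by
  rw [towerIndex, Finset.card_filter, Finset.sum_product_right]
  refine Finset.sum_congr rfl fun j hj => ?_
  have hm0 : m j ≤ m 0 := hm (Nat.zero_le ν) (Nat.lt_succ_iff.mp (Finset.mem_range.mp hj)) j.zero_le
  have hrow : (Finset.range (m 0 + 1)).filter (· ≤ m j) = Finset.Iic (m j) := by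
    ext i
    simp only [Finset.mem_filter, Finset.mem_range, Finset.mem_Iic]
    omega
  rw [← Finset.card_filter, hrow, Nat.card_Iic]

end towerIndex

open scoped Polynomial.Bivariate

namespace Polynomial

theorem natDegree_eval_C_le {R : Type*} [CommSemiring R] {p : R[X][Y]} {d : ℕ}
    (h : ∀ j, (p.coeff j).natDegree ≤ d) (a : R) : (p.eval (C a)).natDegree ≤ d := by
  rw [eval_eq_sum_range]
  refine natDegree_sum_le_of_forall_le _ _ fun j _ => ?_
  rw [← C_pow]
  exact (natDegree_mul_C_le _ _).trans (h j)

theorem natDegree_coeff_divByMonic_X_sub_C_le {R : Type*} [CommRing R] (p : R[X][Y]) (a : R)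
    {n d : ℕ} (h : ∀ i, n < i → (p.coeff i).natDegree ≤ d) :
    ((p /ₘ (X - C (C a))).coeff n).natDegree ≤ d := by
  rw [coeff_divByMonic_X_sub_C]
  refine natDegree_sum_le_of_forall_le _ _ fun i hi => ?_
  rw [← C_pow]
  exact (natDegree_C_mul_le _ _).trans (h i (Finset.mem_Icc.mp hi).1)

theorem natDegree_coeff_le_of_antitoneOn {R : Type*} [Semiring R] {p : R[X][Y]} {ν : ℕ}
    {m : ℕ → ℕ} (hm : AntitoneOn m (Set.Iic ν)) (hp : p.natDegree ≤ ν)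
    (hcoeff : ∀ j, (p.coeff j).natDegree ≤ m j) {i j : ℕ} (hji : j ≤ i) :
    (p.coeff i).natDegree ≤ m j := by
  rcases le_or_gt i ν with hi | hi
  · exact (hcoeff i).trans (hm (hji.trans hi) hi hji)
  · simp [coeff_eq_zero_of_natDegree_lt (hp.trans_lt hi)]

variable {R : Type*} [CommRing R] [IsDomain R]

theorem eq_zero_of_natDegree_le_of_eval_eq_zero_of_injOn {p : R[X]} {d : ℕ}
    (hp : p.natDegree ≤ d) {x : ℕ → R} (hx : Set.InjOn x (Set.Iic d))
    (h : ∀ i ≤ d, p.eval (x i) = 0) : p = 0 := by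
  classical
  refine eq_zero_of_natDegree_lt_card_of_eval_eq_zero' p ((Finset.Iic d).image x) ?_ ?_
  · simpa using h
  · rwa [Finset.card_image_of_injOn (by simpa using hx), Nat.card_Iic, Nat.lt_succ_iff]

theorem eval_C_eq_zero_of_evalEval_eq_zero_of_injOn {f : R[X][Y]} {d : ℕ}
    (hf : ∀ j, (f.coeff j).natDegree ≤ d) {x : ℕ → R} (hx : Set.InjOn x (Set.Iic d)) {a : R}
    (h : ∀ i ≤ d, f.evalEval (x i) a = 0) : f.eval (C a) = 0 :=
  eq_zero_of_natDegree_le_of_eval_eq_zero_of_injOn (natDegree_eval_C_le hf a) hx h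

theorem eq_zero_of_evalEval_eq_zero_of_tower {ν : ℕ} {m : ℕ → ℕ} {y : ℕ → R}
    {xs : ℕ → ℕ → R} (hm : AntitoneOn m (Set.Iic ν)) (hy : Set.InjOn y (Set.Iic ν))
    (hx : ∀ j ≤ ν, Set.InjOn (xs · j) (Set.Iic (m j))) {f : R[X][Y]} (hdeg : f.natDegree ≤ ν)
    (hcoeff : ∀ j, (f.coeff j).natDegree ≤ m j)
    (hf : ∀ j ≤ ν, ∀ i ≤ m j, f.evalEval (xs i j) (y j) = 0) : f = 0 := by
  induction ν generalizing m y xs f with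
  | zero =>
    have hrow := eval_C_eq_zero_of_evalEval_eq_zero_of_injOn
      (fun j => natDegree_coeff_le_of_antitoneOn hm hdeg hcoeff j.zero_le) (hx 0 le_rfl)
      (hf 0 le_rfl)
    rw [eq_C_of_natDegree_le_zero hdeg, eval_C] at hrow
    rw [eq_C_of_natDegree_le_zero hdeg, hrow, C_0]
  | succ ν ih =>
    have hrow := eval_C_eq_zero_of_evalEval_eq_zero_of_injOn
      (fun j => natDegree_coeff_le_of_antitoneOn hm hdeg hcoeff j.zero_le) (hx 0 ν.succ.zero_le)
      (hf 0 ν.succ.zero_le)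
    set g := f /ₘ (X - C (C (y 0)))
    have hfg : (X - C (C (y 0))) * g = f := mul_divByMonic_eq_iff_isRoot.mpr hrow
    have hg : g = 0 := by
      refine ih (m := fun j => m (j + 1)) (y := fun j => y (j + 1)) (xs := fun i j => xs i (j + 1))
        (fun a ha b hb hab => hm (Nat.succ_le_succ ha) (Nat.succ_le_succ hb) (Nat.succ_le_succ hab))
        (fun a ha b hb h => Nat.succ_injective (hy (Nat.succ_le_succ ha) (Nat.succ_le_succ hb) h))
        (fun j hj => hx (j + 1) (Nat.succ_le_succ hj)) ?_
        (fun j => natDegree_coeff_divByMonic_X_sub_C_le f (y 0)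
          fun i hi => natDegree_coeff_le_of_antitoneOn hm hdeg hcoeff hi) ?_
      · rw [natDegree_divByMonic f (monic_X_sub_C _), natDegree_X_sub_C]
        omega
      · intro j hj i hi
        have hfj := hf (j + 1) (Nat.succ_le_succ hj) i hi
        rw [← hfg, evalEval_mul, evalEval_sub, evalEval_X, evalEval_CC, mul_eq_zero,
          sub_eq_zero] at hfj
        exact hfj.resolve_left fun h => j.succ_ne_zero (hy (Nat.succ_le_succ hj) ν.succ.zero_le h)
    rw [← hfg, hg, mul_zero]

end Polynomial

open Polynomial in
theorem linearIndependent_evaluation_towerIndex {F : Type*} [Field F] {ν : ℕ} {m : ℕ → ℕ}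
    {y : ℕ → F} {xs : ℕ → ℕ → F} (hm : AntitoneOn m (Set.Iic ν)) (hy : Set.InjOn y (Set.Iic ν))
    (hx : ∀ j ≤ ν, Set.InjOn (xs · j) (Set.Iic (m j))) :
    LinearIndependent F (fun p : towerIndex ν m => fun q : towerIndex ν m =>
      xs (q : ℕ × ℕ).1 (q : ℕ × ℕ).2 ^ (p : ℕ × ℕ).1 * y (q : ℕ × ℕ).2 ^ (p : ℕ × ℕ).2) := by
  classical
  rw [Fintype.linearIndependent_iff]
  intro c hc p
  -- `f = ∑ c_q x^{q.1} y^{q.2}`, with `y` the outer variable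
  set f : F[X][Y] := ∑ q : towerIndex ν m, monomial q.1.2 (monomial q.1.1 (c q))
  have hf : f = 0 := by
    refine eq_zero_of_evalEval_eq_zero_of_tower hm hy hx ?_ ?_ ?_
    · refine natDegree_sum_le_of_forall_le _ _ fun q _ => ?_
      exact (natDegree_monomial_le _).trans ((mem_towerIndex hm).mp q.2).1
    · intro j
      simp only [f, finsetSum_coeff, Polynomial.coeff_monomial]
      refine natDegree_sum_le_of_forall_le _ _ fun q _ => ?_
      split_ifs with h
      · exact (natDegree_monomial_le _).trans (h ▸ ((mem_towerIndex hm).mp q.2).2)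
      · exact (natDegree_zero).trans_le (Nat.zero_le _)
    · intro j hj i hi
      have := congrFun hc ⟨(i, j), (mem_towerIndex hm).mpr ⟨hj, hi⟩⟩
      simpa [f, evalEval_finsetSum, evalEval, Polynomial.eval_monomial, mul_assoc] using this
  have hcoeff : (f.coeff p.1.2).coeff p.1.1 = c p := by
    simp only [f, finsetSum_coeff, Polynomial.coeff_monomial]
    rw [Fintype.sum_eq_single p fun q hqp => ?_]
    · simp
    · split_ifs with h
      · rw [Polynomial.coeff_monomial, if_neg fun h' => hqp (Subtype.ext (Prod.ext h' h))]
      · rfl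
  rw [← hcoeff, hf, Polynomial.coeff_zero, Polynomial.coeff_zero]

theorem span_eq_top_of_linearIndependent_comp {K V W ι : Type*} [Field K] [AddCommGroup V]
    [Module K V] [AddCommGroup W] [Module K W] [FiniteDimensional K W] [Fintype ι]
    {f : V →ₗ[K] W} (hf : Function.Injective f) {b : ι → V} (hb : LinearIndependent K (f ∘ b))
    (hcard : Fintype.card ι = Module.finrank K W) : Submodule.span K (Set.range b) = ⊤ := by
  have hfb : Submodule.span K (Set.range (f ∘ b)) = ⊤ := hb.span_eq_top_of_card_eq_finrank' hcard
  rw [Set.range_comp, ← Submodule.map_span] at hfb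
  rw [eq_top_iff, ← Submodule.map_le_map_iff_of_injective hf, hfb]
  exact le_top

section evalOnPoints

variable {F ι : Type*} [Field F]

noncomputable def evalOnPoints (P : ι → F × F) : MvPolynomial (Fin 2) F →ₐ[F] (ι → F) :=
  AlgHom.pi fun q => aeval fun i : Fin 2 => if i = 0 then (P q).1 else (P q).2

theorem vanishingIdeal_range (P : ι → F × F) :
    _root_.vanishingIdeal (Set.range P) = RingHom.ker (evalOnPoints P) := by
  ext g
  simp [_root_.vanishingIdeal, evalOnPoints, _root_.funext_iff]

end evalOnPoints

theorem towerSite_eq_range {F : Type*} {ν : ℕ} {m : ℕ → ℕ} (hm : AntitoneOn m (Set.Iic ν))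
    (y : ℕ → F) (xs : ℕ → ℕ → F) :
    {p : F × F | ∃ j ≤ ν, ∃ i ≤ m j, p = (xs i j, y j)} =
      Set.range fun q : towerIndex ν m => (xs (q : ℕ × ℕ).1 (q : ℕ × ℕ).2, y (q : ℕ × ℕ).2) := by
  ext p
  simp only [Set.mem_ofPred_eq, Set.mem_range, Subtype.exists, mem_towerIndex hm, Prod.exists]
  constructor
  · rintro ⟨j, hj, i, hi, rfl⟩
    exact ⟨i, j, ⟨hj, hi⟩, rfl⟩
  · rintro ⟨i, j, ⟨hj, hi⟩, rfl⟩
    exact ⟨j, hj, i, hi, rfl⟩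

/-- for an x-tower site `Ξ` of `μ = ∑_{j≤ν}(m_j+1)` points,
`dim_F F[x,y]/I(Ξ) = μ = #S_x(Ξ)`, and the images of the staircase monomials
`x^i y^j`, `(i,j) ∈ S_x(Ξ)`, form an `F`-basis of the quotient. -/
theorem tower_quotient_dimension_and_basis {F : Type*} [Field F] (ν : ℕ) (m : ℕ → ℕ)
    (y : ℕ → F) (xs : ℕ → ℕ → F)
    (hm : ∀ j k, j < k → k ≤ ν → m k < m j)
    (hy : ∀ j k, j ≤ ν → k ≤ ν → y j = y k → j = k)
    (hx : ∀ j s t, j ≤ ν → s ≤ m j → t ≤ m j → xs s j = xs t j → s = t)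
    (I : Ideal (MvPolynomial (Fin 2) F))
    (hI : I = vanishingIdeal {p : F × F | ∃ j ≤ ν, ∃ i ≤ m j, p = (xs i j, y j)}) :
    Module.finrank F (MvPolynomial (Fin 2) F ⧸ I) =
        ∑ j ∈ Finset.range (ν + 1), (m j + 1) ∧
    Module.finrank F (MvPolynomial (Fin 2) F ⧸ I) = (towerIndex ν m).card ∧
    LinearIndependent F (fun p : towerIndex ν m =>
      Ideal.Quotient.mk I (X 0 ^ (p : ℕ × ℕ).1 * X 1 ^ (p : ℕ × ℕ).2)) ∧
    Submodule.span F (Set.range (fun p : towerIndex ν m =>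
      Ideal.Quotient.mk I (X 0 ^ (p : ℕ × ℕ).1 * X 1 ^ (p : ℕ × ℕ).2))) = ⊤ := by
  have hm' : AntitoneOn m (Set.Iic ν) := fun j _ k hk hjk =>
    hjk.eq_or_lt.elim (fun h => h ▸ le_rfl) fun h => (hm j k h hk).le
  set φ := evalOnPoints fun q : towerIndex ν m => (xs (q : ℕ × ℕ).1 (q : ℕ × ℕ).2, y (q : ℕ × ℕ).2)
  obtain rfl : I = RingHom.ker φ := by rw [hI, towerSite_eq_range hm', vanishingIdeal_range]
  have hb : LinearIndependent F (Ideal.kerLiftAlg φ ∘ fun p : towerIndex ν m =>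
      Ideal.Quotient.mk (RingHom.ker φ) (X 0 ^ (p : ℕ × ℕ).1 * X 1 ^ (p : ℕ × ℕ).2)) := by
    convert linearIndependent_evaluation_towerIndex hm' (fun j hj k hk => hy j k hj hk)
      (fun j hj s hs t ht => hx j s t hj hs ht) using 1
    funext p q
    rw [Function.comp_apply, Ideal.kerLiftAlg_mk]
    simp [φ, evalOnPoints]
  have hli := hb.of_comp (Ideal.kerLiftAlg φ).toLinearMap
  have hspan := span_eq_top_of_linearIndependent_comp (f := (Ideal.kerLiftAlg φ).toLinearMap)
    (Ideal.kerLiftAlg_injective φ) hb (Module.finrank_fintype_fun_eq_card F).symm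
  have hrank := Module.finrank_eq_card_basis (Module.Basis.mk hli hspan.ge)
  rw [Fintype.card_coe] at hrank
  exact ⟨hrank.trans (card_towerIndex hm'), hrank, hli, hspan⟩
end
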